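/- For every positive integer n, the fugacity partition function of staircase tableaux at α = β = γ = δ = 1 and q = 1 equals Z_n(y; 1, 1, 1, 1; 1) = 2^n · (y+1)^n · n!, as an identity in the polynomial ring ℤ[y]. -/

import Mathlib

/-!
Deleting the first column of a staircase tableau of size `m + 1` leaves a staircase tableau `T`
of size `m`. Conversely, a column `c` can be put in front of `T` exactly when its bottom (diagonal)
box is filled, it is empty in every row where `T` has a `β` or a `δ`, and only its topmost filled
box may be an `α` or a `γ`. At `α = β = γ = δ = q = 1`, refine the count by `z` raised to the
number of rows without `β` and `δ`. The columns fitting `T` then contribute `(z + 1) (1 + y)`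
times a factor `z + 2` for every such row of `T`, so `Z_{m+1}(z) = (z + 1) (1 + y) Z_m(z + 2)`.
Hence `Z_n(z) = (1 + y)^n ∏_{j < n} (z + 2 j + 1)`, and `z = 1` gives `2^n n! (1 + y)^n`.
-/

inductive SLetter : Type
  | A | B | G | D
deriving DecidableEq, Repr

instance instFintypeSLetter : Fintype SLetter :=
  ⟨{SLetter.A, SLetter.B, SLetter.G, SLetter.D}, fun x => by cases x <;> simp⟩

/-- A filling `T` of the staircase Young diagram of shape `(n, n-1, …, 1)`
(boxes `(i,j)` with `i + j < n`, row `i` from the top, column `j` from the left,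
diagonal boxes those with `i + j + 1 = n`) is a staircase tableau if:
boxes outside the shape are unused (empty); no diagonal box is empty;
all boxes to the left of a `β` or `δ` in its row are empty;
all boxes above an `α` or `γ` in its column are empty. -/
def IsStaircase (n : ℕ) (T : Fin n → Fin n → Option SLetter) : Prop :=
  (∀ i j : Fin n, n ≤ (i : ℕ) + (j : ℕ) → T i j = none) ∧
  (∀ i j : Fin n, (i : ℕ) + (j : ℕ) + 1 = n → T i j ≠ none) ∧
  (∀ i j j' : Fin n, j' < j → (T i j = some SLetter.B ∨ T i j = some SLetter.D) →
      T i j' = none) ∧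
  (∀ i i' j : Fin n, i' < i → (T i j = some SLetter.A ∨ T i j = some SLetter.G) →
      T i' j = none)

instance (n : ℕ) : DecidablePred (IsStaircase n) := fun T => by
  unfold IsStaircase; infer_instance

/-- The staircase tableaux of size `n`. -/
def StaircaseTableau (n : ℕ) : Type :=
  {T : Fin n → Fin n → Option SLetter // IsStaircase n T}

instance (n : ℕ) : Fintype (StaircaseTableau n) := Subtype.fintype _

instance (n : ℕ) : DecidableEq (StaircaseTableau n) := Subtype.instDecidableEq

/-- The number of boxes of `T` filled with the symbol `x`. -/
def countLetter (n : ℕ) (T : Fin n → Fin n → Option SLetter) (x : SLetter) : ℕ :=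
  (Finset.univ.filter (fun p : Fin n × Fin n => T p.1 p.2 = some x)).card

/-- The label of the nearest labeled box strictly to the right of `(i,j)` in row `i`. -/
def rightLabel (n : ℕ) (T : Fin n → Fin n → Option SLetter) (i j : Fin n) : Option SLetter :=
  List.findSome? (fun j' => T i j') ((List.finRange n).drop ((j : ℕ) + 1))

/-- The label of the nearest labeled box strictly below `(i,j)` in column `j`. -/
def belowLabel (n : ℕ) (T : Fin n → Fin n → Option SLetter) (i j : Fin n) : Option SLetter :=
  List.findSome? (fun i' => T i' j) ((List.finRange n).drop ((i : ℕ) + 1))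

/-- Whether the (empty) box `(i,j)` receives a `q` in the weight of `T`:
an empty box seeing a `δ` to its right gets `q`; an empty box seeing an `α` or `γ` to
its right and a `β` or `γ` below it gets `q`; all other (empty) boxes get `1`. -/
def boxQ (n : ℕ) (T : Fin n → Fin n → Option SLetter) (i j : Fin n) : Bool :=
  match T i j with
  | some _ => false
  | none =>
    match rightLabel n T i j, belowLabel n T i j with
    | some SLetter.D, _ => true
    | some SLetter.A, some SLetter.B => true
    | some SLetter.A, some SLetter.G => true
    | some SLetter.G, some SLetter.B => true
    | some SLetter.G, some SLetter.G => true
    | _, _ => false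

/-- The exponent of `q` in the weight of `T`. -/
def qCount (n : ℕ) (T : Fin n → Fin n → Option SLetter) : ℕ :=
  (Finset.univ.filter (fun p : Fin n × Fin n => boxQ n T p.1 p.2 = true)).card

/-- The type of `T`, as a word in `Fin n → Bool`, read off the diagonal boxes from
northeast (index `0`) to southwest (index `n-1`): `true` (a `•`) for each `α` or `δ`,
`false` (a `∘`) for each `β` or `γ`. -/
def typeWord (n : ℕ) (T : Fin n → Fin n → Option SLetter) : Fin n → Bool := fun i =>
  match T i ⟨n - 1 - (i : ℕ), by have := i.isLt; omega⟩ with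
  | some SLetter.A => true
  | some SLetter.D => true
  | _ => false

/-- `t(T)`, the number of `•`'s in the type of `T`. -/
def bulletCount (n : ℕ) (T : Fin n → Fin n → Option SLetter) : ℕ :=
  (Finset.univ.filter (fun i : Fin n => typeWord n T i = true)).card

/-- The weight of a staircase tableau: the product of all its labels, with each empty
box contributing `q` or `1` according to the rules (`u` is set to `1`). -/
def stWt {R : Type*} [CommSemiring R] (n : ℕ) (a b g d q : R)
    (T : Fin n → Fin n → Option SLetter) : R :=
  a ^ countLetter n T SLetter.A * b ^ countLetter n T SLetter.B *
    g ^ countLetter n T SLetter.G * d ^ countLetter n T SLetter.D * q ^ qCount n T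

/-- The fugacity partition function `Z_n(y; α, β, γ, δ; q) = Σ_T wt(T) y^{t(T)}`,
summed over all staircase tableaux of size `n`. -/
def stZ (R : Type*) [CommSemiring R] (n : ℕ) (y a b g d q : R) : R :=
  ∑ T : StaircaseTableau n, stWt n a b g d q T.val * y ^ bulletCount n T.val

/-- The generating polynomial `Z_σ(α, β, γ, δ; q)` of staircase tableaux of a given
type `σ` (encoded as a list of booleans, `true` = `•`, `false` = `∘`). -/
def stZw (R : Type*) [CommSemiring R] (w : List Bool) (a b g d q : R) : R :=
  ∑ T ∈ Finset.univ.filter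
      (fun T : StaircaseTableau w.length => List.ofFn (typeWord w.length T.val) = w),
    stWt w.length a b g d q T.val

open Finset

lemma Fintype.sum_fin_succ_pi {M α : Type*} [AddCommMonoid M] [Fintype α] {n : ℕ}
    (f : (Fin (n + 1) → α) → M) :
    ∑ c, f c = ∑ x, ∑ c : Fin n → α, f (Fin.cons x c) := by
  rw [← (Fin.consEquiv fun _ => α).sum_comp, Fintype.sum_prod_type]
  rfl

lemma SLetter.sum_univ {M : Type*} [AddCommMonoid M] (f : SLetter → M) :
    ∑ x, f x = f .A + f .B + f .G + f .D := by
  simp [Finset.univ, Fintype.elems, add_assoc]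

namespace StaircaseTableau

variable {m : ℕ}

def RowAvoidsBD (n : ℕ) (T : Fin n → Fin n → Option SLetter) (i : Fin n) : Prop :=
  ∀ j, T i j ≠ some .B ∧ T i j ≠ some .D

instance (n : ℕ) (T : Fin n → Fin n → Option SLetter) : DecidablePred (RowAvoidsBD n T) :=
  fun _ => by unfold RowAvoidsBD; infer_instance

def AvoidsAG {k : ℕ} (c : Fin k → Option SLetter) : Prop :=
  ∀ i, c i ≠ some .A ∧ c i ≠ some .G

instance {k : ℕ} : DecidablePred (AvoidsAG (k := k)) :=
  fun _ => by unfold AvoidsAG; infer_instance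

def ColumnFits (free : Fin m → Prop) (c : Fin (m + 1) → Option SLetter) : Prop :=
  c (Fin.last m) ≠ none ∧
  (∀ i : Fin m, c i.castSucc ≠ none → free i) ∧
  (∀ i i' : Fin (m + 1), i' < i → (c i = some .A ∨ c i = some .G) → c i' = none)

instance (free : Fin m → Prop) [DecidablePred free] : DecidablePred (ColumnFits free) :=
  fun _ => by unfold ColumnFits; infer_instance

def addColumn (T : Fin m → Fin m → Option SLetter) (c : Fin (m + 1) → Option SLetter) :
    Fin (m + 1) → Fin (m + 1) → Option SLetter :=
  fun i => Fin.cons (c i) ((Fin.snoc T fun _ => none : Fin (m + 1) → Fin m → Option SLetter) i)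

def dropColumn (T : Fin (m + 1) → Fin (m + 1) → Option SLetter) :
    Fin m → Fin m → Option SLetter :=
  fun i j => T i.castSucc j.succ

def isBullet : Option SLetter → Bool
  | some .A => true
  | some .D => true
  | _ => false

lemma typeWord_eq (n : ℕ) (T : Fin n → Fin n → Option SLetter) (i : Fin n) :
    typeWord n T i = isBullet (T i ⟨n - 1 - i, by omega⟩) := rfl

section addColumn

variable {T : Fin m → Fin m → Option SLetter} {c : Fin (m + 1) → Option SLetter}

@[simp] lemma addColumn_zero (i : Fin (m + 1)) : addColumn T c i 0 = c i := rfl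

@[simp] lemma addColumn_castSucc_succ (i j : Fin m) :
    addColumn T c i.castSucc j.succ = T i j := by
  simp [addColumn]

@[simp] lemma addColumn_last_succ (j : Fin m) : addColumn T c (Fin.last m) j.succ = none := by
  simp [addColumn]

lemma dropColumn_addColumn : dropColumn (addColumn T c) = T := by
  ext i j
  simp [dropColumn]

lemma isStaircase_addColumn (hT : IsStaircase m T) (hc : ColumnFits (RowAvoidsBD m T) c) :
    IsStaircase (m + 1) (addColumn T c) := by
  obtain ⟨h1, h2, h3, h4⟩ := hT
  obtain ⟨hc1, hc2, hc3⟩ := hc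
  refine ⟨fun i j h => ?_, fun i j h => ?_, fun i j j' h hBD => ?_, fun i i' j h hAG => ?_⟩
  · induction j using Fin.cases <;> induction i using Fin.lastCases <;>
      simp only [addColumn_zero, addColumn_castSucc_succ, addColumn_last_succ, Fin.val_castSucc,
        Fin.val_succ, Fin.val_last, Fin.val_zero] at h ⊢
    all_goals first | omega | exact h1 _ _ (by omega)
  · induction j using Fin.cases <;> induction i using Fin.lastCases <;>
      simp only [addColumn_zero, addColumn_castSucc_succ, addColumn_last_succ, Fin.val_castSucc,
        Fin.val_succ, Fin.val_last, Fin.val_zero] at h ⊢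
    all_goals first | exact hc1 | omega | exact h2 _ _ (by omega)
  · induction j using Fin.cases with
    | zero => exact absurd h (Fin.not_lt_zero _)
    | succ j =>
      induction i using Fin.lastCases with
      | last => simp at hBD
      | cast i =>
        rw [addColumn_castSucc_succ] at hBD
        induction j' using Fin.cases with
        | zero =>
          by_contra hne
          have := hc2 i hne j
          tauto
        | succ j' =>
          rw [addColumn_castSucc_succ]
          exact h3 _ _ _ (Fin.succ_lt_succ_iff.1 h) hBD
  · induction j using Fin.cases with
    | zero => exact hc3 i i' h hAG
    | succ j =>
      induction i using Fin.lastCases with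
      | last => simp at hAG
      | cast i =>
        induction i' using Fin.lastCases with
        | last => exact absurd h (Fin.castSucc_lt_last i).not_gt
        | cast i' =>
          rw [addColumn_castSucc_succ] at hAG ⊢
          exact h4 _ _ _ (Fin.castSucc_lt_castSucc_iff.1 h) hAG

lemma of_isStaircase_addColumn (h : IsStaircase (m + 1) (addColumn T c)) :
    IsStaircase m T ∧ ColumnFits (RowAvoidsBD m T) c := by
  obtain ⟨h1, h2, h3, h4⟩ := h
  refine ⟨⟨fun i j h => ?_, fun i j h => ?_, fun i j j' h => ?_, fun i i' j h => ?_⟩,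
    ?_, fun i hi j => ?_, fun i i' h => ?_⟩
  · simpa using h1 i.castSucc j.succ (by simp; omega)
  · simpa using h2 i.castSucc j.succ (by simp; omega)
  · simpa using h3 i.castSucc j.succ j'.succ (by simpa using h)
  · simpa using h4 i.castSucc i'.castSucc j.succ (by simpa using h)
  · simpa using h2 (Fin.last m) 0 (by simp)
  · have := h3 i.castSucc j.succ 0 (Fin.succ_pos j)
    rw [addColumn_castSucc_succ, addColumn_zero] at this
    tauto
  · simpa using h4 i i' 0 h

lemma typeWord_addColumn_castSucc (i : Fin m) :
    typeWord (m + 1) (addColumn T c) i.castSucc = typeWord m T i := by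
  have hdiag : (⟨m + 1 - 1 - i.castSucc, by omega⟩ : Fin (m + 1)) =
      (⟨m - 1 - i, by omega⟩ : Fin m).succ :=
    Fin.ext (by simp; omega)
  rw [typeWord_eq, typeWord_eq, hdiag, addColumn_castSucc_succ]

lemma typeWord_addColumn_last :
    typeWord (m + 1) (addColumn T c) (Fin.last m) = isBullet (c (Fin.last m)) := by
  rw [typeWord_eq]
  congr 2
  ext
  simp

lemma rowAvoidsBD_addColumn_castSucc (i : Fin m) :
    RowAvoidsBD (m + 1) (addColumn T c) i.castSucc ↔
      ¬(c i.castSucc = some .B ∨ c i.castSucc = some .D) ∧ RowAvoidsBD m T i := by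
  simp [RowAvoidsBD, Fin.forall_fin_succ]

lemma rowAvoidsBD_addColumn_last :
    RowAvoidsBD (m + 1) (addColumn T c) (Fin.last m) ↔
      ¬(c (Fin.last m) = some .B ∨ c (Fin.last m) = some .D) := by
  simp [RowAvoidsBD, Fin.forall_fin_succ]

end addColumn

lemma addColumn_dropColumn {T : Fin (m + 1) → Fin (m + 1) → Option SLetter}
    (hT : IsStaircase (m + 1) T) : addColumn (dropColumn T) (fun i => T i 0) = T := by
  ext i j : 2
  induction j using Fin.cases with
  | zero => rfl
  | succ j =>
    induction i using Fin.lastCases with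
    | last => simpa using (hT.1 (Fin.last m) j.succ (by simp)).symm
    | cast i => simp [dropColumn]

def succEquiv (m : ℕ) : StaircaseTableau (m + 1) ≃
    Σ T : StaircaseTableau m, {c // ColumnFits (RowAvoidsBD m T.1) c} where
  toFun T :=
    have hT := of_isStaircase_addColumn ((addColumn_dropColumn T.2).symm ▸ T.2)
    ⟨⟨dropColumn T.1, hT.1⟩, ⟨_, hT.2⟩⟩
  invFun p := ⟨addColumn p.1.1 p.2.1, isStaircase_addColumn p.1.2 p.2.2⟩
  left_inv T := Subtype.ext (addColumn_dropColumn T.2)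
  right_inv p := Sigma.subtype_ext (Subtype.ext (dropColumn_addColumn (c := p.2.1))) rfl

lemma sum_succ {M : Type*} [AddCommMonoid M]
    (f : (Fin (m + 1) → Fin (m + 1) → Option SLetter) → M) :
    ∑ T : StaircaseTableau (m + 1), f T.1 =
      ∑ T : StaircaseTableau m, ∑ c with ColumnFits (RowAvoidsBD m T.1) c,
        f (addColumn T.1 c) := by
  rw [← (succEquiv m).symm.sum_comp, Fintype.sum_sigma]
  refine Fintype.sum_congr _ _ fun T => ?_
  exact (Finset.sum_subtype {c | ColumnFits (RowAvoidsBD m T.1) c} (fun c => by simp)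
    fun c => f (addColumn T.1 c)).symm

lemma columnFits_zero (free : Fin 0 → Prop) (c : Fin 1 → Option SLetter) :
    ColumnFits free c ↔ c 0 ≠ none := by
  simp [ColumnFits, Fin.last]

lemma columnFits_cons (free : Fin (m + 1) → Prop) (x : Option SLetter)
    (c : Fin (m + 1) → Option SLetter) :
    ColumnFits free (Fin.cons x c) ↔
      ColumnFits (fun i => free i.succ) c ∧ (x ≠ none → free 0 ∧ AvoidsAG c) := by
  have hlast : (Fin.cons x c : Fin (m + 2) → Option SLetter) (Fin.last (m + 1)) =
      c (Fin.last m) := by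
    rw [← Fin.succ_last, Fin.cons_succ]
  unfold ColumnFits
  rw [hlast]
  constructor
  · rintro ⟨h1, h2, h3⟩
    refine ⟨⟨h1, fun i hi => h2 i.succ (by simpa [← Fin.succ_castSucc] using hi),
      fun i i' hlt hAG => by simpa using h3 i.succ i'.succ (by simpa) (by simpa)⟩,
      fun hx => ⟨h2 0 (by simpa using hx), fun i => ?_⟩⟩
    have := h3 i.succ 0 (Fin.succ_pos i)
    rw [Fin.cons_succ, Fin.cons_zero] at this
    tauto
  · rintro ⟨⟨h1, h2, h3⟩, hx⟩
    refine ⟨h1, fun i hi => ?_, fun i i' hlt hAG => ?_⟩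
    · induction i using Fin.cases with
      | zero => exact (hx (by simpa using hi)).1
      | succ i => exact h2 i (by simpa [← Fin.succ_castSucc] using hi)
    · induction i using Fin.cases with
      | zero => exact absurd hlt (Fin.not_lt_zero _)
      | succ i =>
        rw [Fin.cons_succ] at hAG
        induction i' using Fin.cases with
        | zero =>
          by_contra hne
          have := (hx hne).2 i
          tauto
        | succ i' => simpa using h3 i i' (by simpa using hlt) hAG

lemma columnFits_and_avoidsAG_cons (free : Fin (m + 1) → Prop) (x : Option SLetter)
    (c : Fin (m + 1) → Option SLetter) :
    ColumnFits free (Fin.cons x c) ∧ AvoidsAG (Fin.cons x c : Fin (m + 2) → Option SLetter) ↔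
      (¬(x = some .A ∨ x = some .G) ∧ (x ≠ none → free 0)) ∧
        (ColumnFits (fun i => free i.succ) c ∧ AvoidsAG c) := by
  simp only [columnFits_cons, AvoidsAG, Fin.forall_fin_succ, Fin.cons_zero, Fin.cons_succ]
  tauto

variable {R : Type*} [CommSemiring R]

def rowWeight (z y : R) (n : ℕ) (T : Fin n → Fin n → Option SLetter) : R :=
  ∏ i, (if RowAvoidsBD n T i then z else 1) * (if typeWord n T i then y else 1)

def rowPartition (z y : R) (n : ℕ) : R :=
  ∑ T : StaircaseTableau n, rowWeight z y n T.1

def cellWeight (z : R) (free : Prop) [Decidable free] (x : Option SLetter) : R :=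
  if free ∧ ¬(x = some .B ∨ x = some .D) then z else 1

def columnWeight (z y : R) (free : Fin m → Prop) [DecidablePred free]
    (c : Fin (m + 1) → Option SLetter) : R :=
  (∏ i : Fin m, cellWeight z (free i) (c i.castSucc)) *
    (cellWeight z True (c (Fin.last m)) * if isBullet (c (Fin.last m)) then y else 1)

lemma rowWeight_addColumn (z y : R) (T : Fin m → Fin m → Option SLetter)
    (c : Fin (m + 1) → Option SLetter) :
    rowWeight z y (m + 1) (addColumn T c) =
      (∏ i, if typeWord m T i then y else 1) * columnWeight z y (RowAvoidsBD m T) c := by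
  simp only [rowWeight, columnWeight, Fin.prod_univ_castSucc, typeWord_addColumn_castSucc,
    typeWord_addColumn_last, rowAvoidsBD_addColumn_castSucc, rowAvoidsBD_addColumn_last,
    cellWeight, true_and, Finset.prod_mul_distrib, and_comm]
  ring

lemma columnWeight_cons (z y : R) (free : Fin (m + 1) → Prop) [DecidablePred free]
    (x : Option SLetter) (c : Fin (m + 1) → Option SLetter) :
    columnWeight z y free (Fin.cons x c) =
      cellWeight z (free 0) x * columnWeight z y (fun i => free i.succ) c := by
  simp only [columnWeight, Fin.prod_univ_succ, ← Fin.succ_castSucc, ← Fin.succ_last,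
    Fin.cons_succ, Fin.castSucc_zero, Fin.cons_zero]
  ring

lemma sum_columnWeight_avoidsAG (z y : R) (free : Fin m → Prop) [DecidablePred free] :
    ∑ c with ColumnFits free c ∧ AvoidsAG c, columnWeight z y free c =
      (1 + y) * ∏ i, if free i then z + 2 else 1 := by
  induction m with
  | zero =>
    rw [Finset.sum_filter, Fintype.sum_fin_succ_pi]
    simp [columnFits_zero, AvoidsAG, columnWeight, cellWeight, Fintype.sum_option,
      SLetter.sum_univ, isBullet]
  | succ m ih =>
    simp only [Finset.sum_filter] at ih ⊢
    rw [Fintype.sum_fin_succ_pi]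
    simp only [columnFits_and_avoidsAG_cons, columnWeight_cons, ← ite_zero_mul_ite_zero,
      ← Finset.mul_sum, ← Finset.sum_mul, ih, Fin.prod_univ_succ, Fintype.sum_option,
      SLetter.sum_univ]
    by_cases h0 : free 0
    · simp [h0, cellWeight]
      ring
    · simp [h0, cellWeight]

lemma sum_columnWeight (z y : R) (free : Fin m → Prop) [DecidablePred free] :
    ∑ c with ColumnFits free c, columnWeight z y free c =
      (z + 1) * ((1 + y) * ∏ i, if free i then z + 2 else 1) := by
  induction m with
  | zero =>
    rw [Finset.sum_filter, Fintype.sum_fin_succ_pi]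
    simp [columnFits_zero, columnWeight, cellWeight, Fintype.sum_option, SLetter.sum_univ,
      isBullet]
    ring
  | succ m ih =>
    set free' : Fin m → Prop := fun i => free i.succ
    have hnone : ∀ c : Fin (m + 1) → Option SLetter,
        (if ColumnFits free (Fin.cons none c) then columnWeight z y free (Fin.cons none c)
          else 0) =
        cellWeight z (free 0) none *
          if ColumnFits free' c then columnWeight z y free' c else 0 := by
      simp [columnFits_cons, columnWeight_cons, free']
    have hsome : ∀ (l : SLetter) (c : Fin (m + 1) → Option SLetter),
        (if ColumnFits free (Fin.cons (some l) c) then columnWeight z y free (Fin.cons (some l) c)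
          else 0) =
        (if free 0 then cellWeight z (free 0) (some l) else 0) *
          if ColumnFits free' c ∧ AvoidsAG c then columnWeight z y free' c else 0 := by
      simp only [ite_zero_mul_ite_zero, columnFits_cons, columnWeight_cons, ne_eq, reduceCtorEq,
        not_false_eq_true, forall_const, and_left_comm, free', implies_true]
    rw [Finset.sum_filter, Fintype.sum_fin_succ_pi, Fintype.sum_option]
    simp only [hnone, hsome, ← Finset.mul_sum, ← Finset.sum_mul, ← Finset.sum_filter, ih,
      sum_columnWeight_avoidsAG, Fin.prod_univ_succ, free']
    by_cases h0 : free 0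
    · simp [h0, cellWeight, SLetter.sum_univ]
      ring
    · simp [h0, cellWeight]

lemma rowPartition_zero (z y : R) : rowPartition z y 0 = 1 := by
  have hcard : Fintype.card (StaircaseTableau 0) = 1 := by decide
  simp [rowPartition, rowWeight, hcard]

lemma rowPartition_succ (z y : R) (m : ℕ) :
    rowPartition z y (m + 1) = (z + 1) * (1 + y) * rowPartition (z + 2) y m := by
  simp only [rowPartition, sum_succ, Finset.mul_sum]
  refine Finset.sum_congr rfl fun T _ => ?_
  rw [Finset.sum_congr rfl fun c _ => rowWeight_addColumn z y T.1 c, ← Finset.mul_sum,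
    sum_columnWeight]
  simp only [rowWeight, Finset.prod_mul_distrib]
  ring

lemma rowPartition_eq_prod (z y : R) (n : ℕ) :
    rowPartition z y n = (1 + y) ^ n * ∏ j ∈ range n, (z + 2 * j + 1) := by
  induction n generalizing z with
  | zero => simp [rowPartition_zero]
  | succ n ih =>
    have hshift : ∏ j ∈ range n, (z + 2 + 2 * (j : R) + 1) =
        ∏ j ∈ range n, (z + 2 * ((j + 1 : ℕ) : R) + 1) :=
      Finset.prod_congr rfl fun j _ => by push_cast; ring
    rw [rowPartition_succ, ih, Finset.prod_range_succ', hshift]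
    push_cast
    ring

lemma stZ_one_eq_rowPartition (y : R) (n : ℕ) : stZ R n y 1 1 1 1 1 = rowPartition 1 y n := by
  refine Finset.sum_congr rfl fun T _ => ?_
  simp [stWt, rowWeight, bulletCount, ← Finset.prod_filter]

end StaircaseTableau

open Polynomial in
theorem staircase_partition_all_one_general (n : ℕ) :
    stZ (Polynomial ℤ) n X 1 1 1 1 1 =
      2 ^ n * (X + 1) ^ n * (n.factorial : Polynomial ℤ) := by
  have hprod : ∏ j ∈ range n, (1 + 2 * (j : ℤ[X]) + 1) = 2 ^ n * n.factorial :=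
    calc ∏ j ∈ range n, (1 + 2 * (j : ℤ[X]) + 1)
        _ = ∏ j ∈ range n, 2 * ((j + 1 : ℕ) : ℤ[X]) :=
          Finset.prod_congr rfl fun j _ => by push_cast; ring
        _ = 2 ^ n * n.factorial := by
          rw [Finset.prod_mul_distrib, Finset.prod_const, Finset.card_range, ← Nat.cast_prod,
            Finset.prod_range_add_one_eq_factorial]
  rw [StaircaseTableau.stZ_one_eq_rowPartition, StaircaseTableau.rowPartition_eq_prod, hprod,
    add_comm 1 X]
  ring

open Polynomial in
/-- For every positive integer `n`, the fugacity partition function of staircase tableaux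
at `α = β = γ = δ = 1` and `q = 1` equals `Z_n(y; 1,1,1,1; 1) = 2^n (y+1)^n n!` in `ℤ[y]`. -/
theorem staircase_partition_all_one (n : ℕ) (hn : 1 ≤ n) :
    stZ (Polynomial ℤ) n X 1 1 1 1 1 =
      2 ^ n * (X + 1) ^ n * (n.factorial : Polynomial ℤ) :=
  staircase_partition_all_one_general n
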